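/- Let f : {0,1}^N → {0,1} be total, Γ a nearest-neighbor adversary matrix for f, and for S ⊆ [N] with |S| = p let Γ_S be as usual. Then ‖Γ_S‖ ≤ (max_{i∈[N]} ‖Γ_i‖) · (max_{g ∈ F_p(f)} λ(g)), where F_p(f) is the set of all restrictions of f to p free coordinates (with the remaining N−p coordinates fixed), and λ(g) is the spectral sensitivity of g. Consequently, for every nearest-neighbor adversary matrix Γ, ‖Γ‖ / max_{|S|=p} ‖Γ_S‖ ≥ (‖Γ‖ / max_i ‖Γ_i‖) / max_{g ∈ F_p(f)} λ(g). -/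

import Mathlib

open Finset

/-- The spectral norm (largest singular value) of a real matrix. -/
noncomputable def specNorm {m n : Type*} [Fintype m] [Fintype n] [DecidableEq n]
    (M : Matrix m n ℝ) : ℝ :=
  ‖LinearMap.toContinuousLinearMap
      ((Matrix.toEuclideanLin : Matrix m n ℝ ≃ₗ[ℝ] _) M)‖

/-- The spectral sensitivity `λ(g)` of a total Boolean function `g`: the spectral
norm of the adjacency matrix of its sensitivity graph (`A_g[z,z'] = 1` iff
`d(z,z') = 1` and `g z ≠ g z'`). -/
noncomputable def spectralSens {τ : Type*} [Fintype τ] [DecidableEq τ]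
    (g : (τ → Bool) → Bool) : ℝ :=
  specNorm (fun z z' : τ → Bool =>
    if hammingDist z z' = 1 ∧ g z ≠ g z' then (1 : ℝ) else 0)

variable {N : ℕ}

/-- `gammaS Γ S` zeroes out all entries `Γ[x,y]` where `x` and `y` agree on `S`. -/
def gammaS (Γ : Matrix (Fin N → Bool) (Fin N → Bool) ℝ) (S : Finset (Fin N)) :
    Matrix (Fin N → Bool) (Fin N → Bool) ℝ :=
  fun x y => if ∀ i ∈ S, x i = y i then 0 else Γ x y

/-- Glue an assignment `z` on `S` with an assignment `b` outside `S`. -/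
def glue (S : Finset (Fin N)) (z : {i // i ∈ S} → Bool) (b : {i // i ∉ S} → Bool) :
    Fin N → Bool :=
  fun i => if h : i ∈ S then z ⟨i, h⟩ else b ⟨i, h⟩

/-- The largest spectral sensitivity of a restriction of `f` to `p` free
coordinates (all remaining coordinates fixed). -/
noncomputable def maxResSens (f : (Fin N → Bool) → Bool) (p : ℕ) : ℝ :=
  ⨆ (S : Finset (Fin N)) (_ : S.card = p) (b : {i // i ∉ S} → Bool),
    spectralSens (fun z : {i // i ∈ S} → Bool => f (glue S z b))

section helpers
variable {m n : Type*} [Fintype m] [Fintype n] [DecidableEq n]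

lemma specNorm_nonneg (M : Matrix m n ℝ) : 0 ≤ specNorm M := norm_nonneg _

lemma specNorm_apply (M : Matrix m n ℝ) (v : EuclideanSpace ℝ n) (x : m) :
    (LinearMap.toContinuousLinearMap
      ((Matrix.toEuclideanLin : Matrix m n ℝ ≃ₗ[ℝ] _) M) v) x = ∑ y, M x y * v y := rfl

omit [DecidableEq n] in
lemma euclid_coord_le_norm (v : EuclideanSpace ℝ n) (x : n) : |v x| ≤ ‖v‖ := by
  rw [EuclideanSpace.norm_eq]
  have h1 : |v x| = Real.sqrt (‖v x‖ ^ 2) := by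
    rw [Real.sqrt_sq (norm_nonneg _)]; exact (Real.norm_eq_abs _).symm
  rw [h1]
  exact Real.sqrt_le_sqrt (Finset.single_le_sum (fun i _ => sq_nonneg ‖v i‖) (mem_univ x))

lemma abs_entry_le_specNorm (M : Matrix m n ℝ) (x : m) (y : n) :
    |M x y| ≤ specNorm M := by
  set T := LinearMap.toContinuousLinearMap
      ((Matrix.toEuclideanLin : Matrix m n ℝ ≃ₗ[ℝ] _) M) with hT
  have h0 : (T (EuclideanSpace.single y (1:ℝ))) x = M x y := by
    rw [specNorm_apply]
    simp [EuclideanSpace.single_apply]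
  calc |M x y| = |(T (EuclideanSpace.single y (1:ℝ))) x| := by rw [h0]
    _ ≤ ‖T (EuclideanSpace.single y (1:ℝ))‖ := euclid_coord_le_norm _ _
    _ ≤ ‖T‖ * ‖EuclideanSpace.single y (1:ℝ)‖ := T.le_opNorm _
    _ = specNorm M := by rw [EuclideanSpace.norm_single]; simp [specNorm, hT]

omit [Fintype n] [DecidableEq n] in
lemma euclid_norm_le_of_coord {v : EuclideanSpace ℝ m} {w : EuclideanSpace ℝ m}
    (h : ∀ x, |v x| ≤ |w x|) : ‖v‖ ≤ ‖w‖ := by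
  rw [EuclideanSpace.norm_eq, EuclideanSpace.norm_eq]
  apply Real.sqrt_le_sqrt
  apply Finset.sum_le_sum
  intro i _
  have := h i
  simp only [Real.norm_eq_abs]
  exact pow_le_pow_left₀ (abs_nonneg _) this 2
end helpers

section sq
variable {n κ : Type*} [Fintype n] [DecidableEq n] [Fintype κ] [DecidableEq κ]

lemma specNorm_le_mul_of_abs_le (M B : Matrix n n ℝ) (c : ℝ) (hc : 0 ≤ c)
    (hBnonneg : ∀ x y, 0 ≤ B x y) (h : ∀ x y, |M x y| ≤ c * B x y) : specNorm M ≤ c * specNorm B := by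
  apply ContinuousLinearMap.opNorm_le_bound _ (mul_nonneg hc (specNorm_nonneg B))
  intro v
  set w : EuclideanSpace ℝ n := WithLp.toLp 2 (fun y => |v y|) with hw
  have hwv : ‖w‖ = ‖v‖ := by
    rw [EuclideanSpace.norm_eq, EuclideanSpace.norm_eq]
    congr 1; apply Finset.sum_congr rfl; intro i _
    simp [hw, Real.norm_eq_abs, sq_abs]
  set TB := LinearMap.toContinuousLinearMap
      ((Matrix.toEuclideanLin : Matrix n n ℝ ≃ₗ[ℝ] _) B) with hTB
  have key : ∀ x, |(LinearMap.toContinuousLinearMap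
      ((Matrix.toEuclideanLin : Matrix n n ℝ ≃ₗ[ℝ] _) M) v) x| ≤ |(c • (TB w)) x| := by
    intro x
    rw [specNorm_apply]
    have h1 : |∑ y, M x y * v y| ≤ ∑ y, c * (B x y * |v y|) := by
      refine (Finset.abs_sum_le_sum_abs _ _).trans ?_
      apply Finset.sum_le_sum; intro y _
      rw [abs_mul, ← mul_assoc]
      exact mul_le_mul_of_nonneg_right (h x y) (abs_nonneg _)
    have h2 : (c • (TB w)) x = c * ∑ y, B x y * w y := by
      rw [hTB, PiLp.smul_apply, smul_eq_mul, specNorm_apply]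
    have h3 : 0 ≤ (c • (TB w)) x := by
      rw [h2]
      exact mul_nonneg hc (Finset.sum_nonneg fun y _ => mul_nonneg (hBnonneg x y) (abs_nonneg _))
    rw [abs_of_nonneg h3, h2, Finset.mul_sum]
    exact h1
  calc ‖_‖ ≤ ‖c • (TB w)‖ := euclid_norm_le_of_coord key
    _ = c * ‖TB w‖ := by rw [norm_smul, Real.norm_eq_abs, abs_of_nonneg hc]
    _ ≤ c * (specNorm B * ‖w‖) :=
        mul_le_mul_of_nonneg_left (TB.le_opNorm w) hc
    _ = c * specNorm B * ‖v‖ := by rw [hwv]; ring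

lemma specNorm_submatrix_le {α : Type*} [Fintype α] [DecidableEq α]
    (M : Matrix n n ℝ) (e : α ≃ n) : specNorm (M.submatrix e e) ≤ specNorm M := by
  apply ContinuousLinearMap.opNorm_le_bound _ (specNorm_nonneg M)
  intro v
  set w : EuclideanSpace ℝ n := WithLp.toLp 2 (fun b => v (e.symm b)) with hw
  have hwv : ‖w‖ = ‖v‖ := by
    rw [EuclideanSpace.norm_eq, EuclideanSpace.norm_eq]
    congr 1
    exact Fintype.sum_equiv e.symm _ _ fun b => rfl
  set TM := LinearMap.toContinuousLinearMap
      ((Matrix.toEuclideanLin : Matrix n n ℝ ≃ₗ[ℝ] _) M) with hTM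
  have happ : ∀ a, (LinearMap.toContinuousLinearMap
      ((Matrix.toEuclideanLin : Matrix α α ℝ ≃ₗ[ℝ] _) (M.submatrix e e)) v) a
      = (TM w) (e a) := by
    intro a
    rw [specNorm_apply, hTM, specNorm_apply]
    refine Fintype.sum_equiv e _ _ fun y => ?_
    rw [hw]
    simp only [Matrix.submatrix_apply, PiLp.toLp_apply]
    rw [Equiv.symm_apply_apply]
  have hnorm : ‖LinearMap.toContinuousLinearMap
      ((Matrix.toEuclideanLin : Matrix α α ℝ ≃ₗ[ℝ] _) (M.submatrix e e)) v‖ = ‖TM w‖ := by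
    rw [EuclideanSpace.norm_eq, EuclideanSpace.norm_eq]
    congr 1
    refine Fintype.sum_equiv e _ _ fun a => by rw [happ a]
  rw [hnorm, ← hwv]
  exact TM.le_opNorm w

lemma specNorm_blockDiag (g : κ → Matrix n n ℝ) (c : ℝ) (hc : 0 ≤ c)
    (h : ∀ b, specNorm (g b) ≤ c) :
    specNorm (Matrix.of fun p q : n × κ => if p.2 = q.2 then g p.2 p.1 q.1 else 0) ≤ c := by
  apply ContinuousLinearMap.opNorm_le_bound _ hc
  intro v
  set vb : κ → EuclideanSpace ℝ n := fun b => WithLp.toLp 2 (fun i => v (i, b)) with hvb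
  have happ : ∀ x b, (LinearMap.toContinuousLinearMap
      ((Matrix.toEuclideanLin : Matrix (n × κ) (n × κ) ℝ ≃ₗ[ℝ] _)
        (Matrix.of fun p q : n × κ => if p.2 = q.2 then g p.2 p.1 q.1 else 0)) v) (x, b)
      = (LinearMap.toContinuousLinearMap
      ((Matrix.toEuclideanLin : Matrix n n ℝ ≃ₗ[ℝ] _) (g b))
        (vb b)) x := by
    intro x b
    rw [specNorm_apply, specNorm_apply]
    rw [Fintype.sum_prod_type_right]
    simp only [Matrix.of_apply]
    rw [Finset.sum_comm]
    apply Finset.sum_congr rfl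
    intro y _
    simp [ite_mul, Finset.sum_ite_eq, hvb]
  set F := fun b => (LinearMap.toContinuousLinearMap
      ((Matrix.toEuclideanLin : Matrix n n ℝ ≃ₗ[ℝ] _) (g b))
        (WithLp.toLp 2 (fun i => v (i, b)) : EuclideanSpace ℝ n)) with hF
  have hFb : ∀ b, ∑ x, ‖F b x‖ ^ 2 ≤ (c * ‖vb b‖) ^ 2 := by
    intro b
    have h1 : ‖F b‖ ≤ c * ‖vb b‖ :=
      le_trans (ContinuousLinearMap.le_opNorm _ _)
        (mul_le_mul_of_nonneg_right (h b) (norm_nonneg _))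
    have h2 : ∑ x, ‖F b x‖ ^ 2 = ‖F b‖ ^ 2 := by
      rw [EuclideanSpace.norm_eq, Real.sq_sqrt (by positivity)]
    rw [h2]
    exact pow_le_pow_left₀ (norm_nonneg _) h1 2
  calc ‖_‖ = Real.sqrt (∑ b, ∑ x, ‖F b x‖ ^ 2) := by
        rw [EuclideanSpace.norm_eq, Fintype.sum_prod_type_right]
        congr 1
        refine Finset.sum_congr rfl fun b _ => Finset.sum_congr rfl fun x _ => ?_
        rw [happ x b]
    _ ≤ Real.sqrt (∑ b, (c * ‖vb b‖) ^ 2) :=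
        Real.sqrt_le_sqrt (Finset.sum_le_sum fun b _ => hFb b)
    _ = Real.sqrt (c ^ 2 * ∑ b, ∑ x, ‖v (x, b)‖ ^ 2) := by
        rw [Finset.mul_sum]
        congr 1
        refine Finset.sum_congr rfl fun b _ => ?_
        rw [mul_pow, EuclideanSpace.norm_eq, Real.sq_sqrt (by positivity)]
    _ = c * ‖v‖ := by
        rw [Real.sqrt_mul (sq_nonneg c), Real.sqrt_sq hc, EuclideanSpace.norm_eq,
          Fintype.sum_prod_type_right]

/-- Split an assignment along `S`. -/
def splitEquiv (S : Finset (Fin N)) :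
    (Fin N → Bool) ≃ (({i // i ∈ S} → Bool) × ({i // i ∉ S} → Bool)) where
  toFun x := (fun i => x i.1, fun i => x i.1)
  invFun p := glue S p.1 p.2
  left_inv x := by
    funext i
    by_cases h : i ∈ S <;> simp [glue, h]
  right_inv p := by
    cases p with
    | mk z b =>
      ext i
      · simp [glue, i.2]
      · simp [glue, i.2]

lemma glue_splitEquiv (S : Finset (Fin N)) (x : Fin N → Bool) :
    glue S ((splitEquiv S x).1) ((splitEquiv S x).2) = x := (splitEquiv S).left_inv x

lemma le_maxResSens (f : (Fin N → Bool) → Bool) {p : ℕ} (S : Finset (Fin N))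
    (hS : S.card = p) (b : {i // i ∉ S} → Bool) :
    spectralSens (fun z : {i // i ∈ S} → Bool => f (glue S z b)) ≤ maxResSens f p := by
  have h1 : spectralSens (fun z : {i // i ∈ S} → Bool => f (glue S z b)) ≤
      ⨆ b' : {i // i ∉ S} → Bool,
        spectralSens (fun z : {i // i ∈ S} → Bool => f (glue S z b')) :=
    le_ciSup (f := fun b' : {i // i ∉ S} → Bool =>
      spectralSens (fun z : {i // i ∈ S} → Bool => f (glue S z b')))
      (Set.Finite.bddAbove (Set.finite_range _)) b
  refine h1.trans ?_
  have h2 : (⨆ b' : {i // i ∉ S} → Bool,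
        spectralSens (fun z : {i // i ∈ S} → Bool => f (glue S z b'))) =
      ⨆ (_ : S.card = p), ⨆ b' : {i // i ∉ S} → Bool,
        spectralSens (fun z : {i // i ∈ S} → Bool => f (glue S z b')) :=
    (ciSup_pos (f := fun _ : S.card = p => ⨆ b' : {i // i ∉ S} → Bool,
      spectralSens (fun z : {i // i ∈ S} → Bool => f (glue S z b'))) hS).symm
  rw [h2]
  exact le_ciSup (f := fun S' : Finset (Fin N) => ⨆ (_ : S'.card = p),
      ⨆ b' : {i // i ∉ S'} → Bool,
        spectralSens (fun z : {i // i ∈ S'} → Bool => f (glue S' z b')))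
    (Set.Finite.bddAbove (Set.finite_range _)) S

lemma maxResSens_nonneg (f : (Fin N → Bool) → Bool) {p : ℕ} (hp : p ≤ N) :
    0 ≤ maxResSens f p := by
  obtain ⟨S, -, -, hS⟩ := Finset.exists_subsuperset_card_eq (n := p)
    (Finset.empty_subset (Finset.univ : Finset (Fin N)))
    (by simp) (by simp [hp])
  exact le_trans (specNorm_nonneg _) (le_maxResSens f S hS (fun _ => false))

lemma gammaS_le_blockBound [NeZero N] {p : ℕ} (hp : p ≤ N) (f : (Fin N → Bool) → Bool)
    (Γ : Matrix (Fin N → Bool) (Fin N → Bool) ℝ)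
    (hadv : ∀ x y, f x = f y → Γ x y = 0)
    (hnn : ∀ x y, 1 < hammingDist x y → Γ x y = 0)
    (S : Finset (Fin N)) (hS : S.card = p) :
    specNorm (gammaS Γ S) ≤
      (⨆ i : Fin N, specNorm (gammaS Γ {i})) * maxResSens f p := by
  set C := ⨆ i : Fin N, specNorm (gammaS Γ {i}) with hC
  have hCle : ∀ i, specNorm (gammaS Γ {i}) ≤ C := fun i =>
    le_ciSup (f := fun i : Fin N => specNorm (gammaS Γ {i}))
      (Set.Finite.bddAbove (Set.finite_range _)) i
  have hC0 : 0 ≤ C := by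
    have i0 : Fin N := ⟨0, Nat.pos_of_ne_zero (NeZero.ne N)⟩
    exact le_trans (specNorm_nonneg (gammaS Γ {i0})) (hCle i0)
  set g : ({i // i ∉ S} → Bool) →
      Matrix ({i // i ∈ S} → Bool) ({i // i ∈ S} → Bool) ℝ :=
    fun b z z' => if hammingDist z z' = 1 ∧ f (glue S z b) ≠ f (glue S z' b)
      then (1 : ℝ) else 0 with hg
  set Blk := Matrix.of fun pq qq : ({i // i ∈ S} → Bool) × ({i // i ∉ S} → Bool) =>
    if pq.2 = qq.2 then g pq.2 pq.1 qq.1 else 0 with hBlk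
  have hBlknorm : specNorm Blk ≤ maxResSens f p :=
    specNorm_blockDiag g _ (maxResSens_nonneg f hp) (fun b => le_maxResSens f S hS b)
  set e := splitEquiv S with he
  have hBnn : ∀ x y, 0 ≤ Blk.submatrix e e x y := by
    intro x y
    simp only [Matrix.submatrix_apply, hBlk, Matrix.of_apply, hg]
    split_ifs <;> norm_num
  have hentry : ∀ x y, |gammaS Γ S x y| ≤ C * Blk.submatrix e e x y := by
    intro x y
    by_cases hxy : ∀ i ∈ S, x i = y i
    · rw [gammaS, if_pos hxy, abs_zero]
      exact mul_nonneg hC0 (hBnn x y)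
    · rw [gammaS, if_neg hxy]
      by_cases hΓ : Γ x y = 0
      · rw [hΓ, abs_zero]
        exact mul_nonneg hC0 (hBnn x y)
      · push_neg at hxy
        obtain ⟨i₀, hi₀S, hi₀⟩ := hxy
        have hfxy : f x ≠ f y := fun h => hΓ (hadv x y h)
        have hne : x ≠ y := fun h => hi₀ (congrFun h i₀)
        have hd : (Finset.univ.filter (fun i => x i ≠ y i)).card = 1 :=
          le_antisymm (not_lt.mp fun hlt => hΓ (hnn x y hlt))
            (Nat.one_le_iff_ne_zero.mpr (hammingDist_ne_zero.mpr hne))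
        obtain ⟨a, ha⟩ := Finset.card_eq_one.mp hd
        have hai : a = i₀ := by
          have : i₀ ∈ Finset.univ.filter (fun i => x i ≠ y i) :=
            Finset.mem_filter.mpr ⟨Finset.mem_univ _, hi₀⟩
          rw [ha, Finset.mem_singleton] at this
          exact this.symm
        subst hai
        have huniq : ∀ j, x j ≠ y j → j = a := fun j hj =>
          Finset.mem_singleton.mp
            (ha ▸ Finset.mem_filter.mpr ⟨Finset.mem_univ _, hj⟩)
        have hout : (e x).2 = (e y).2 := by
          funext j
          show x j.1 = y j.1
          by_contra hc
          exact j.2 (huniq j.1 hc ▸ hi₀S)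
        have hdin : hammingDist ((e x).1) ((e y).1) = 1 := by
          show (Finset.univ.filter (fun j : {i // i ∈ S} => x j.1 ≠ y j.1)).card = 1
          rw [Finset.card_eq_one]
          refine ⟨⟨a, hi₀S⟩, Finset.eq_singleton_iff_unique_mem.mpr
            ⟨Finset.mem_filter.mpr ⟨Finset.mem_univ _, hi₀⟩, fun j hj =>
              Subtype.ext (huniq j.1 (Finset.mem_filter.mp hj).2)⟩⟩
        have e2 : glue S ((e x).1) ((e y).2) = x := by
          rw [← hout]
          exact glue_splitEquiv S x
        have hBlk1 : Blk.submatrix e e x y = 1 := by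
          simp only [Matrix.submatrix_apply, hBlk, Matrix.of_apply]
          rw [if_pos hout, hg]
          simp only
          rw [hout, e2, glue_splitEquiv]
          rw [if_pos ⟨hdin, hfxy⟩]
        rw [hBlk1, mul_one]
        have hGi : Γ x y = gammaS Γ {a} x y := by
          rw [gammaS, if_neg]
          intro hall
          exact hi₀ (hall a (Finset.mem_singleton_self a))
        rw [hGi]
        exact (abs_entry_le_specNorm _ x y).trans (hCle a)
  calc specNorm (gammaS Γ S) ≤ C * specNorm (Blk.submatrix e e) :=
        specNorm_le_mul_of_abs_le _ _ C hC0 hBnn hentry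
    _ ≤ C * specNorm Blk :=
        mul_le_mul_of_nonneg_left (specNorm_submatrix_le Blk e) hC0
    _ ≤ C * maxResSens f p := mul_le_mul_of_nonneg_left hBlknorm hC0

lemma specNorm_zero {m n : Type*} [Fintype m] [Fintype n] [DecidableEq n] :
    specNorm (0 : Matrix m n ℝ) = 0 := by
  rw [specNorm, map_zero, map_zero, norm_zero]

lemma maxResSens_zero (f : (Fin N → Bool) → Bool) : maxResSens f 0 = 0 := by
  refine le_antisymm ?_ (maxResSens_nonneg f (Nat.zero_le N))
  apply ciSup_le
  intro S
  by_cases h : S.card = 0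
  · rw [ciSup_pos (f := fun _ : S.card = 0 => ⨆ b : {i // i ∉ S} → Bool,
      spectralSens (fun z : {i // i ∈ S} → Bool => f (glue S z b))) h]
    apply ciSup_le
    intro b
    have hS : S = ∅ := Finset.card_eq_zero.mp h
    haveI : IsEmpty {i // i ∈ S} := ⟨fun j => by simp [hS] at j; exact j.2⟩
    have hmat : (fun z z' : {i // i ∈ S} → Bool =>
        if hammingDist z z' = 1 ∧ f (glue S z b) ≠ f (glue S z' b) then (1:ℝ) else 0) =
        (0 : Matrix ({i // i ∈ S} → Bool) ({i // i ∈ S} → Bool) ℝ) := by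
      funext z z'
      have : z = z' := Subsingleton.elim z z'
      subst this
      simp [hammingDist_self]
    rw [spectralSens, hmat, specNorm_zero]
  · haveI : IsEmpty (S.card = 0) := ⟨h⟩
    rw [Real.iSup_of_isEmpty]

/-- For a total `f` and a nearest-neighbor adversary matrix `Γ`
for `f`: for every `S` with `|S| = p`,
`‖Γ_S‖ ≤ (maxᵢ ‖Γᵢ‖) · (max_{g ∈ F_p(f)} λ(g))`, and consequently
`‖Γ‖ / max_{|S|=p} ‖Γ_S‖ ≥ (‖Γ‖ / maxᵢ ‖Γᵢ‖) / max_{g ∈ F_p(f)} λ(g)`. -/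
theorem nn_adversary_parallel_bound [NeZero N] (p : ℕ) (hp : p ≤ N)
    (f : (Fin N → Bool) → Bool)
    (Γ : Matrix (Fin N → Bool) (Fin N → Bool) ℝ)
    (hsym : ∀ x y, Γ x y = Γ y x)
    (hadv : ∀ x y, f x = f y → Γ x y = 0)
    (hnn : ∀ x y, 1 < hammingDist x y → Γ x y = 0) :
    (∀ S : Finset (Fin N), S.card = p →
        specNorm (gammaS Γ S) ≤
          (⨆ i : Fin N, specNorm (gammaS Γ {i})) * maxResSens f p) ∧
      specNorm Γ / (⨆ (S : Finset (Fin N)) (_ : S.card = p), specNorm (gammaS Γ S)) ≥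
        (specNorm Γ / ⨆ i : Fin N, specNorm (gammaS Γ {i})) / maxResSens f p := by
  have part1 : ∀ S : Finset (Fin N), S.card = p →
      specNorm (gammaS Γ S) ≤
        (⨆ i : Fin N, specNorm (gammaS Γ {i})) * maxResSens f p :=
    fun S hS => gammaS_le_blockBound hp f Γ hadv hnn S hS
  refine ⟨part1, ?_⟩
  set C := ⨆ i : Fin N, specNorm (gammaS Γ {i}) with hC
  set m := maxResSens f p with hm
  set supS := ⨆ (S : Finset (Fin N)) (_ : S.card = p), specNorm (gammaS Γ S) with hsupS
  have hC0 : 0 ≤ C := by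
    have i0 : Fin N := ⟨0, Nat.pos_of_ne_zero (NeZero.ne N)⟩
    exact le_trans (specNorm_nonneg (gammaS Γ {i0}))
      (le_ciSup (f := fun i : Fin N => specNorm (gammaS Γ {i}))
        (Set.Finite.bddAbove (Set.finite_range _)) i0)
  have hm0 : 0 ≤ m := maxResSens_nonneg f hp
  have hle_supS : ∀ S : Finset (Fin N), S.card = p → specNorm (gammaS Γ S) ≤ supS := by
    intro S hS
    have h1 : specNorm (gammaS Γ S) =
        ⨆ (_ : S.card = p), specNorm (gammaS Γ S) :=
      (ciSup_pos (f := fun _ : S.card = p => specNorm (gammaS Γ S)) hS).symm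
    rw [hsupS, h1]
    exact le_ciSup (f := fun S' : Finset (Fin N) =>
        ⨆ (_ : S'.card = p), specNorm (gammaS Γ S'))
      (Set.Finite.bddAbove (Set.finite_range _)) S
  have hsupS_le : supS ≤ C * m := by
    apply ciSup_le
    intro S
    by_cases h : S.card = p
    · rw [ciSup_pos (f := fun _ : S.card = p => specNorm (gammaS Γ S)) h]
      exact part1 S h
    · haveI : IsEmpty (S.card = p) := ⟨h⟩
      rw [Real.iSup_of_isEmpty]
      exact mul_nonneg hC0 hm0
  have hsupS0 : 0 ≤ supS := by
    obtain ⟨S, -, -, hS⟩ := Finset.exists_subsuperset_card_eq (n := p)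
      (Finset.empty_subset (Finset.univ : Finset (Fin N)))
      (by simp) (by simp [hp])
    exact le_trans (specNorm_nonneg _) (hle_supS S hS)
  rw [ge_iff_le, div_div]
  by_cases hΓ0 : specNorm Γ = 0
  · simp [hΓ0, zero_div]
  by_cases hp0 : p = 0
  · subst hp0
    rw [hm, maxResSens_zero, mul_zero, div_zero]
    exact div_nonneg (specNorm_nonneg Γ) hsupS0
  · have hΓne : Γ ≠ 0 := fun h0 => hΓ0 (by rw [h0, specNorm_zero])
    have hx : ∃ x y, Γ x y ≠ 0 := by
      by_contra h
      push_neg at h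
      exact hΓne (by ext x y; exact h x y)
    obtain ⟨x, y, hΓxy⟩ := hx
    have hxy : x ≠ y := fun h => hΓxy (hadv x y (by rw [h]))
    obtain ⟨i₀, hi₀⟩ := Function.ne_iff.mp hxy
    obtain ⟨S, hsub, -, hS⟩ := Finset.exists_subsuperset_card_eq (n := p)
      (Finset.subset_univ ({i₀} : Finset (Fin N)))
      (by simpa using Nat.one_le_iff_ne_zero.mpr hp0) (by simp [hp])
    have hmem : i₀ ∈ S := hsub (Finset.mem_singleton_self _)
    have hgS : gammaS Γ S x y = Γ x y := by
      rw [gammaS, if_neg]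
      intro hall
      exact hi₀ (hall i₀ hmem)
    have hpos : 0 < specNorm (gammaS Γ S) :=
      lt_of_lt_of_le (abs_pos.mpr hΓxy)
        (le_trans (le_of_eq (by rw [hgS])) (abs_entry_le_specNorm (gammaS Γ S) x y))
    have hsup_pos : 0 < supS := lt_of_lt_of_le hpos (hle_supS S hS)
    exact div_le_div_of_nonneg_left (specNorm_nonneg Γ) hsup_pos hsupS_le
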